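/- arXiv:2310.04096 — 2 statements merged into one kernel-verified Lean document; each statement's English description precedes it below -/
import Mathlib

section
/- Let C ⊆ ℝ^n be a compact convex set, f : ℝ^n → ℝ convex and differentiable on an open set containing C, and suppose (C,f) satisfies the strong (M,1)-growth property for some M > 0. Let ℓ ∈ ℕ with ℓ ≥ 1, η_t = ℓ/(t+ℓ), and S = max{1, ⌈ℓM/2 − ℓ⌉} (equivalently, S is the least i ≥ 1 with M·η_i/2 ≤ 1). Then the iterates of the Frank–Wolfe algorithm with these step sizes satisfy, for all t ≥ S, primaldual_t ≤ primaldual_S · (η_{t−1}/η_{S−1})^ℓ · exp(Mπ²ℓ²/12). -/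
open Set Finset Real Pointwise

noncomputable section

abbrev Eucl (n : ℕ) := EuclideanSpace ℝ (Fin n)

variable {n : ℕ}

/-- A Frank–Wolfe vertex at `x`: a minimizer over `C` of the linear function `y ↦ ⟪∇f(x), y⟫`. -/
def IsFWVertex (C : Set (Eucl n)) (f : Eucl n → ℝ) (x v : Eucl n) : Prop :=
  v ∈ C ∧ ∀ y ∈ C, (inner ℝ (gradient f x) v : ℝ) ≤ (inner ℝ (gradient f x) y : ℝ)

/-- The Wolfe gap `gap(x) = max_{y ∈ C} ⟪∇f(x), x - y⟫`. -/
def gapF (C : Set (Eucl n)) (f : Eucl n → ℝ) (x : Eucl n) : ℝ :=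
  sSup ((fun y => (inner ℝ (gradient f x) (x - y) : ℝ)) '' C)

/-- The primal suboptimality gap `subopt(x) = f(x) - min_{y ∈ C} f(y)`. -/
def suboptF (C : Set (Eucl n)) (f : Eucl n → ℝ) (x : Eucl n) : ℝ :=
  f x - sInf (f '' C)

/-- Bregman divergence `D_f(y, x) = f(y) - f(x) - ⟪∇f(x), y - x⟫`. -/
def bregmanD (f : Eucl n → ℝ) (y x : Eucl n) : ℝ :=
  f y - f x - (inner ℝ (gradient f x) (y - x) : ℝ)

/-- Strong `(M, r)`-growth property. -/
def StrongGrowth (C : Set (Eucl n)) (f : Eucl n → ℝ) (M r : ℝ) : Prop :=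
  ∀ x ∈ C, ∀ v, IsFWVertex C f x v → ∀ η ∈ Icc (0:ℝ) 1,
    bregmanD f (x + η • (v - x)) x ≤ M * η ^ 2 / 2 * gapF C f x ^ r

/-- Weak `(M, r)`-growth property. -/
def WeakGrowth (C : Set (Eucl n)) (f : Eucl n → ℝ) (M r : ℝ) : Prop :=
  ∀ x ∈ C, ∀ v, IsFWVertex C f x v → ∀ η ∈ Icc (0:ℝ) 1,
    bregmanD f (x + η • (v - x)) x * suboptF C f x ^ (1 - r) ≤ M * η ^ 2 / 2 * gapF C f x

/-- Gaps `(m, r)`-growth property. -/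
def GapsGrowth (C : Set (Eucl n)) (f : Eucl n → ℝ) (m r : ℝ) : Prop :=
  ∀ x ∈ C, m * suboptF C f x ^ (1 - r) ≤ gapF C f x

/-- `primaldual_t = min_{0 ≤ k ≤ t} (f(x_t) - f(x_k) + gap_k)`. -/
def primaldualSeq (C : Set (Eucl n)) (f : Eucl n → ℝ) (x : ℕ → Eucl n) (t : ℕ) : ℝ :=
  (Finset.range (t + 1)).inf' (Finset.nonempty_range_iff.mpr (Nat.succ_ne_zero t))
    (fun k => f (x t) - f (x k) + gapF C f (x k))

/-! Along the Frank–Wolfe step the strong `(M,1)`-growth property gives the descent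
`f(x_{t+1}) ≤ f(x_t) - (η_t - M η_t² / 2) gap_t`; as `primaldual_t ≤ gap_t`, this contracts
`primaldual` by the factor `1 - η_t + M η_t² / 2` as soon as `M η_t ≤ 2`, which is the case from
`t = S` on. Each factor is at most `t / (t + ℓ) · exp (M ℓ² / (2 t²))`: the rational parts
telescope to `((S + ℓ - 1) / (t + ℓ - 1)) ^ ℓ = (η_{t-1} / η_{S-1}) ^ ℓ`, and the exponents add up
to at most `M ℓ² / 2 · ζ(2) = M π² ℓ² / 12`. -/

theorem ConvexOn.inner_gradient_sub_le {E : Type*} [NormedAddCommGroup E] [InnerProductSpace ℝ E]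
    [CompleteSpace E] {C : Set E} {f : E → ℝ} (hf : ConvexOn ℝ C f) {x y : E} (hx : x ∈ C)
    (hy : y ∈ C) (hfx : DifferentiableAt ℝ f x) :
    inner ℝ (gradient f x) (y - x) ≤ f y - f x := by
  have hline : HasDerivAt (f ∘ AffineMap.lineMap (k := ℝ) x y)
      (inner ℝ (gradient f x) (y - x)) 0 := by
    rw [gradient, InnerProductSpace.toDual_symm_apply]
    exact HasFDerivAt.comp_hasDerivAt _ (by simpa using hfx.hasFDerivAt)
      AffineMap.hasDerivAt_lineMap
  simpa [slope_def_field] using (hf.comp_affineMap (AffineMap.lineMap x y)).le_slope_of_hasDerivAt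
    (by simpa using hx) (by simpa using hy) zero_lt_one hline

theorem Convex.frankWolfe_mem {E : Type*} [AddCommGroup E] [Module ℝ E] {C : Set E}
    (hC : Convex ℝ C) {x v : ℕ → E} {η : ℕ → ℝ} (hx0 : x 0 ∈ C) (hv : ∀ t, v t ∈ C)
    (hη : ∀ t, η t ∈ Icc (0 : ℝ) 1) (hstep : ∀ t, x (t + 1) = x t + η t • (v t - x t)) :
    ∀ t, x t ∈ C
  | 0 => hx0
  | t + 1 => hstep t ▸ hC.add_smul_sub_mem (hC.frankWolfe_mem hx0 hv hη hstep t) (hv t) (hη t)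

namespace IsFWVertex

variable {C : Set (Eucl n)} {f : Eucl n → ℝ} {x v : Eucl n}

theorem inner_sub_le (hv : IsFWVertex C f x v) {y : Eucl n} (hy : y ∈ C) :
    inner ℝ (gradient f x) (x - y) ≤ inner ℝ (gradient f x) (x - v) := by
  simp only [inner_sub_right]
  linarith [hv.2 y hy]

theorem gapF_eq (hv : IsFWVertex C f x v) : gapF C f x = inner ℝ (gradient f x) (x - v) :=
  IsGreatest.csSup_eq ⟨⟨v, hv.1, rfl⟩, by rintro _ ⟨y, hy, rfl⟩; exact hv.inner_sub_le hy⟩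

theorem inner_sub_le_gapF (hv : IsFWVertex C f x v) {y : Eucl n} (hy : y ∈ C) :
    inner ℝ (gradient f x) (x - y) ≤ gapF C f x :=
  hv.gapF_eq ▸ hv.inner_sub_le hy

end IsFWVertex

theorem StrongGrowth.le_sub_mul_gapF {C : Set (Eucl n)} {f : Eucl n → ℝ} {M : ℝ}
    (h : StrongGrowth C f M 1) {x v : Eucl n} (hx : x ∈ C) (hv : IsFWVertex C f x v) {η : ℝ}
    (hη : η ∈ Icc (0 : ℝ) 1) :
    f (x + η • (v - x)) ≤ f x - (η - M * η ^ 2 / 2) * gapF C f x := by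
  have hinner : inner ℝ (gradient f x) (v - x) = -gapF C f x := by
    rw [hv.gapF_eq, ← inner_neg_right, neg_sub]
  have := h x hx v hv η hη
  rw [Real.rpow_one, bregmanD, add_sub_cancel_left, inner_smul_right, hinner] at this
  linarith

section PrimalDual

variable {C : Set (Eucl n)} {f : Eucl n → ℝ} {x : ℕ → Eucl n}

theorem primaldualSeq_le {s k : ℕ} (hk : k ≤ s) :
    primaldualSeq C f x s ≤ f (x s) - f (x k) + gapF C f (x k) :=
  inf'_le _ (mem_range_succ_iff.mpr hk)

theorem primaldualSeq_le_gapF (s : ℕ) : primaldualSeq C f x s ≤ gapF C f (x s) :=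
  (primaldualSeq_le le_rfl).trans_eq (by ring)

theorem primaldualSeq_nonneg (hf : ConvexOn ℝ C f) {v : ℕ → Eucl n} (hxC : ∀ i, x i ∈ C)
    (hv : ∀ i, IsFWVertex C f (x i) (v i)) (hfx : ∀ i, DifferentiableAt ℝ f (x i)) (s : ℕ) :
    0 ≤ primaldualSeq C f x s :=
  le_inf' _ _ fun k _ => by
    have hconv := hf.inner_gradient_sub_le (hxC k) (hxC s) (hfx k)
    have hgap := (hv k).inner_sub_le_gapF (hxC s)
    rw [← neg_sub, inner_neg_right] at hgap
    linarith

theorem primaldualSeq_succ_le {s : ℕ} {c : ℝ} (hc : 0 ≤ c)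
    (hdesc : f (x (s + 1)) ≤ f (x s) - c * gapF C f (x s)) :
    primaldualSeq C f x (s + 1) ≤ (1 - c) * primaldualSeq C f x s := by
  obtain ⟨k, hk, hmin⟩ := exists_mem_eq_inf' (nonempty_range_iff.mpr s.succ_ne_zero)
    (fun k => f (x s) - f (x k) + gapF C f (x k))
  have hks : k ≤ s := mem_range_succ_iff.mp hk
  have hgap : c * primaldualSeq C f x s ≤ c * gapF C f (x s) :=
    mul_le_mul_of_nonneg_left (primaldualSeq_le_gapF s) hc
  calc primaldualSeq C f x (s + 1) ≤ f (x (s + 1)) - f (x k) + gapF C f (x k) :=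
        primaldualSeq_le (hks.trans s.le_succ)
    _ ≤ primaldualSeq C f x s - c * gapF C f (x s) := by rw [primaldualSeq, hmin]; linarith
    _ ≤ (1 - c) * primaldualSeq C f x s := by linarith

end PrimalDual

theorem le_mul_prod_Ico_of_succ_le {a r : ℕ → ℝ} {S : ℕ} (hr : ∀ i, S ≤ i → 0 ≤ r i)
    (h : ∀ i, S ≤ i → a (i + 1) ≤ r i * a i) {t : ℕ} (ht : S ≤ t) :
    a t ≤ a S * ∏ i ∈ Ico S t, r i := by
  induction t, ht using Nat.le_induction with
  | base => simp
  | succ m hm ih =>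
    calc a (m + 1) ≤ r m * a m := h m hm
      _ ≤ r m * (a S * ∏ i ∈ Ico S m, r i) := mul_le_mul_of_nonneg_left ih (hr m hm)
      _ = a S * ∏ i ∈ Ico S (m + 1), r i := by rw [prod_Ico_succ_top hm]; ring

theorem prod_Ico_mul_prod_range_add {M : Type*} [CommMonoid M] (g : ℕ → M) (ℓ : ℕ) {S t : ℕ}
    (hSt : S ≤ t) :
    (∏ i ∈ Ico S t, g i) * ∏ j ∈ range ℓ, g (t + j) =
      (∏ j ∈ range ℓ, g (S + j)) * ∏ i ∈ Ico S t, g (i + ℓ) := by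
  simp only [range_eq_Ico, prod_Ico_add, prod_Ico_add', zero_add]
  rw [prod_Ico_consecutive _ hSt (by omega), add_comm ℓ S,
    prod_Ico_consecutive _ (by omega) (by omega), add_comm]

theorem prod_Ico_div_add_eq (ℓ : ℕ) {S t : ℕ} (hS : 1 ≤ S) (hSt : S ≤ t) :
    ∏ i ∈ Ico S t, ((i : ℝ) / (i + ℓ)) = ∏ j ∈ range ℓ, ((S + j : ℝ) / (t + j)) := by
  have hpos : ∀ i : ℕ, 1 ≤ i → ∀ j : ℕ, (0 : ℝ) < i + j := fun i hi j => by
    have : (1 : ℝ) ≤ i := by exact_mod_cast hi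
    positivity
  rw [prod_div_distrib, prod_div_distrib, div_eq_div_iff
    (prod_pos fun i hi => hpos i (hS.trans (mem_Ico.mp hi).1) ℓ).ne'
    (prod_pos fun j _ => hpos t (hS.trans hSt) j).ne']
  exact_mod_cast prod_Ico_mul_prod_range_add (fun i : ℕ => (i : ℝ)) ℓ hSt

theorem prod_Ico_div_add_le (ℓ : ℕ) {S t : ℕ} (hS : 1 ≤ S) (hSt : S ≤ t) :
    ∏ i ∈ Ico S t, ((i : ℝ) / (i + ℓ)) ≤ ((S + ℓ - 1 : ℝ) / (t + ℓ - 1)) ^ ℓ := by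
  have hSR : (1 : ℝ) ≤ S := by exact_mod_cast hS
  have htR : (S : ℝ) ≤ t := by exact_mod_cast hSt
  rw [prod_Ico_div_add_eq ℓ hS hSt, pow_eq_prod_const]
  refine prod_le_prod (fun j _ => by positivity) fun j hj => ?_
  have hjℓ : (j : ℝ) + 1 ≤ ℓ := by exact_mod_cast mem_range.mp hj
  have hj0 : (0 : ℝ) ≤ j := j.cast_nonneg
  rw [div_le_div_iff₀ (by linarith) (by linarith)]
  nlinarith

theorem one_sub_sub_mul_sq_nonneg {M η : ℝ} (hM : 0 ≤ M) (hη : η ≤ 1) :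
    0 ≤ 1 - (η - M * η ^ 2 / 2) := by
  nlinarith [sq_nonneg η]

theorem one_sub_add_sq_le_mul_exp {M ℓ i : ℝ} (hM : 0 ≤ M) (hℓ : 0 ≤ ℓ) (hi : 0 < i) :
    1 - (ℓ / (i + ℓ) - M * (ℓ / (i + ℓ)) ^ 2 / 2) ≤
      i / (i + ℓ) * exp (M * ℓ ^ 2 / 2 * (1 / i ^ 2)) :=
  calc 1 - (ℓ / (i + ℓ) - M * (ℓ / (i + ℓ)) ^ 2 / 2)
      ≤ i / (i + ℓ) * (M * ℓ ^ 2 / 2 * (1 / i ^ 2) + 1) := by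
        have hgap : i / (i + ℓ) * (M * ℓ ^ 2 / 2 * (1 / i ^ 2) + 1) -
            (1 - (ℓ / (i + ℓ) - M * (ℓ / (i + ℓ)) ^ 2 / 2)) =
              M * ℓ ^ 3 / (2 * i * (i + ℓ) ^ 2) := by
          field_simp
          ring
        have : 0 ≤ M * ℓ ^ 3 / (2 * i * (i + ℓ) ^ 2) := by positivity
        linarith
    _ ≤ i / (i + ℓ) * exp (M * ℓ ^ 2 / 2 * (1 / i ^ 2)) := by
        gcongr
        exact add_one_le_exp _

section OpenLoop

variable {ℓ : ℕ} {η : ℕ → ℝ}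

theorem openLoop_mem_Icc (hη : ∀ t : ℕ, η t = (ℓ : ℝ) / ((t : ℝ) + ℓ)) (t : ℕ) :
    η t ∈ Icc (0 : ℝ) 1 := by
  rw [hη]
  exact ⟨by positivity, div_le_one_of_le₀ (by simp) (by positivity)⟩

theorem openLoop_pred_div_openLoop_pred (hη : ∀ t : ℕ, η t = (ℓ : ℝ) / ((t : ℝ) + ℓ))
    (hℓ : 1 ≤ ℓ) {S t : ℕ} (hS : 1 ≤ S) (ht : 1 ≤ t) :
    η (t - 1) / η (S - 1) = (S + ℓ - 1 : ℝ) / (t + ℓ - 1) := by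
  have hℓR : (1 : ℝ) ≤ ℓ := by exact_mod_cast hℓ
  rw [hη, hη, Nat.cast_sub hS, Nat.cast_sub ht, Nat.cast_one]
  field_simp
  ring

theorem mul_openLoop_le_two (hη : ∀ t : ℕ, η t = (ℓ : ℝ) / ((t : ℝ) + ℓ)) {M : ℝ} {S i : ℕ}
    (hS : S = max 1 (⌈(ℓ : ℝ) * M / 2 - (ℓ : ℝ)⌉.toNat)) (hi : S ≤ i) : M * η i ≤ 2 := by
  have hSi : (ℓ : ℝ) * M / 2 - ℓ ≤ i :=
    calc (ℓ : ℝ) * M / 2 - ℓ ≤ ⌈(ℓ : ℝ) * M / 2 - ℓ⌉ := Int.le_ceil _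
      _ ≤ ⌈(ℓ : ℝ) * M / 2 - ℓ⌉.toNat := by exact_mod_cast Int.self_le_toNat _
      _ ≤ i := by exact_mod_cast (le_max_right _ _).trans (hS ▸ hi)
  have hi1 : (1 : ℝ) ≤ i := by exact_mod_cast (le_max_left _ _).trans (hS ▸ hi)
  rw [hη, mul_div_assoc', div_le_iff₀ (by positivity)]
  linarith

theorem prod_Ico_one_sub_openLoop_le (hη : ∀ t : ℕ, η t = (ℓ : ℝ) / ((t : ℝ) + ℓ)) {M : ℝ}
    (hM : 0 ≤ M) {S t : ℕ} (hS : 1 ≤ S) (hSt : S ≤ t) :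
    ∏ i ∈ Ico S t, (1 - (η i - M * η i ^ 2 / 2)) ≤
      ((S + ℓ - 1 : ℝ) / (t + ℓ - 1)) ^ ℓ * exp (M * π ^ 2 * ℓ ^ 2 / 12) := by
  have hsum : ∑ i ∈ Ico S t, M * ℓ ^ 2 / 2 * (1 / (i : ℝ) ^ 2) ≤ M * π ^ 2 * ℓ ^ 2 / 12 := by
    rw [← mul_sum]
    calc M * ℓ ^ 2 / 2 * ∑ i ∈ Ico S t, 1 / (i : ℝ) ^ 2 ≤ M * ℓ ^ 2 / 2 * (π ^ 2 / 6) := by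
          gcongr
          exact sum_le_hasSum (Ico S t) (fun i _ => by positivity) hasSum_zeta_two
      _ = M * π ^ 2 * ℓ ^ 2 / 12 := by ring
  calc ∏ i ∈ Ico S t, (1 - (η i - M * η i ^ 2 / 2))
      ≤ ∏ i ∈ Ico S t, ((i : ℝ) / (i + ℓ) * exp (M * ℓ ^ 2 / 2 * (1 / (i : ℝ) ^ 2))) := by
        refine prod_le_prod (fun i _ => ?_) fun i hi => ?_
        · exact one_sub_sub_mul_sq_nonneg hM (openLoop_mem_Icc hη i).2
        · have : (1 : ℝ) ≤ i := by exact_mod_cast hS.trans (mem_Ico.mp hi).1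
          rw [hη]
          exact one_sub_add_sq_le_mul_exp hM ℓ.cast_nonneg (by linarith)
    _ = (∏ i ∈ Ico S t, ((i : ℝ) / (i + ℓ))) *
          exp (∑ i ∈ Ico S t, M * ℓ ^ 2 / 2 * (1 / (i : ℝ) ^ 2)) := by
        rw [prod_mul_distrib, exp_sum]
    _ ≤ ((S + ℓ - 1 : ℝ) / (t + ℓ - 1)) ^ ℓ * exp (M * π ^ 2 * ℓ ^ 2 / 12) := by
        have hSR : (1 : ℝ) ≤ S := by exact_mod_cast hS
        have htR : (S : ℝ) ≤ t := by exact_mod_cast hSt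
        gcongr
        · have := ℓ.cast_nonneg (α := ℝ)
          exact pow_nonneg (div_nonneg (by linarith) (by linarith)) ℓ
        · exact prod_Ico_div_add_le ℓ hS hSt

end OpenLoop

theorem fw_strong_growth_one_rate_general
    (n : ℕ) (C : Set (Eucl n)) (f : Eucl n → ℝ)
    (hCconv : Convex ℝ C)
    (hfconv : ConvexOn ℝ C f)
    (U : Set (Eucl n)) (hUopen : IsOpen U) (hCU : C ⊆ U)
    (hfdiff : DifferentiableOn ℝ f U)
    (M : ℝ) (hM : 0 < M) (hgrowth : StrongGrowth C f M 1)
    (ℓ : ℕ) (hℓ : 1 ≤ ℓ)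
    (η : ℕ → ℝ) (hη : ∀ t : ℕ, η t = (ℓ : ℝ) / ((t : ℝ) + ℓ))
    (x v : ℕ → Eucl n)
    (hx0 : x 0 ∈ C)
    (hv : ∀ t : ℕ, IsFWVertex C f (x t) (v t))
    (hstep : ∀ t : ℕ, x (t + 1) = x t + η t • (v t - x t))
    (S : ℕ) (hS : S = max 1 (⌈(ℓ : ℝ) * M / 2 - (ℓ : ℝ)⌉.toNat))
    (t : ℕ) (ht : S ≤ t) :
    primaldualSeq C f x t ≤
      primaldualSeq C f x S * (η (t - 1) / η (S - 1)) ^ ℓ *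
        Real.exp (M * π ^ 2 * (ℓ : ℝ) ^ 2 / 12) := by
  have hS1 : 1 ≤ S := hS ▸ le_max_left _ _
  have hηI := openLoop_mem_Icc hη
  have hxC := hCconv.frankWolfe_mem hx0 (fun t => (hv t).1) hηI hstep
  have hpd_nonneg := primaldualSeq_nonneg hfconv hxC hv fun i =>
    hfdiff.differentiableAt (hUopen.mem_nhds (hCU (hxC i)))
  have hcontract : ∀ i, S ≤ i → primaldualSeq C f x (i + 1) ≤
      (1 - (η i - M * η i ^ 2 / 2)) * primaldualSeq C f x i := fun i hi => by
    have hdesc := hgrowth.le_sub_mul_gapF (hxC i) (hv i) (hηI i)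
    rw [← hstep] at hdesc
    exact primaldualSeq_succ_le (by nlinarith [mul_openLoop_le_two hη hS hi, (hηI i).1]) hdesc
  calc primaldualSeq C f x t
      ≤ primaldualSeq C f x S * ∏ i ∈ Ico S t, (1 - (η i - M * η i ^ 2 / 2)) :=
        le_mul_prod_Ico_of_succ_le
          (fun i _ => one_sub_sub_mul_sq_nonneg hM.le (hηI i).2) hcontract ht
    _ ≤ primaldualSeq C f x S *
          (((S + ℓ - 1 : ℝ) / (t + ℓ - 1)) ^ ℓ * exp (M * π ^ 2 * ℓ ^ 2 / 12)) :=
        mul_le_mul_of_nonneg_left (prod_Ico_one_sub_openLoop_le hη hM.le hS1 ht) (hpd_nonneg S)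
    _ = _ := by rw [openLoop_pred_div_openLoop_pred hη hℓ hS1 (hS1.trans ht)]; ring

/-- **Theorem (Strong `(M,1)`-growth, primal-dual rate).** -/
theorem fw_strong_growth_one_rate
    (n : ℕ) (C : Set (Eucl n)) (f : Eucl n → ℝ)
    (hCcomp : IsCompact C) (hCconv : Convex ℝ C) (hCne : C.Nonempty)
    (hfconv : ConvexOn ℝ C f)
    (U : Set (Eucl n)) (hUopen : IsOpen U) (hCU : C ⊆ U)
    (hfdiff : DifferentiableOn ℝ f U)
    (M : ℝ) (hM : 0 < M) (hgrowth : StrongGrowth C f M 1)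
    (ℓ : ℕ) (hℓ : 1 ≤ ℓ)
    (η : ℕ → ℝ) (hη : ∀ t : ℕ, η t = (ℓ : ℝ) / ((t : ℝ) + ℓ))
    (x v : ℕ → Eucl n)
    (hx0 : x 0 ∈ C)
    (hv : ∀ t : ℕ, IsFWVertex C f (x t) (v t))
    (hstep : ∀ t : ℕ, x (t + 1) = x t + η t • (v t - x t))
    (S : ℕ) (hS : S = max 1 (⌈(ℓ : ℝ) * M / 2 - (ℓ : ℝ)⌉.toNat))
    (t : ℕ) (ht : S ≤ t) :
    primaldualSeq C f x t ≤
      primaldualSeq C f x S * (η (t - 1) / η (S - 1)) ^ ℓ *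
        Real.exp (M * π ^ 2 * (ℓ : ℝ) ^ 2 / 12) :=
  fw_strong_growth_one_rate_general n C f hCconv hfconv U hUopen hCU hfdiff M hM hgrowth ℓ hℓ η hη x
    v hx0 hv hstep S hS t ht
end
end

section
/- Let C ⊆ ℝ^n be a compact convex set, f : ℝ^n → ℝ convex and differentiable on an open set containing C, and suppose (C,f) satisfies both the strong (M,0)-growth property and the weak (M,r)-growth property for some M > 0 and r ∈ [0,1). Let ℓ ∈ ℕ with ℓ ≥ 1, η_t = ℓ/(t+ℓ), S = max{1, ⌈ℓM/2 − ℓ⌉}, and ε ∈ (0,ℓ). Then the iterates of the Frank–Wolfe algorithm with these step sizes satisfy, for all t ≥ S, subopt_t ≤ exp(εℓ/S) · max{ subopt_S · (η_{t−1}/η_{S−1})^{ℓ−ε}, η_{t−1}^{min{ℓ−ε, 1/(1−r), 2}} · ( (ℓM/(2ε))^{1/(1−r)} + M/2 ) }. -/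
open Set Finset Real Pointwise

noncomputable section

variable {n : ℕ}

/-! Write `h_t` for the suboptimality. A Frank–Wolfe step satisfies
`h_{t+1} = h_t - η_t gap_t + D_f(x_{t+1}, x_t)` and `h_t ≤ gap_t` by convexity. If
`h_t^(1-r) ≥ η_t ℓ M / (2ε)`, weak growth gives `D_f ≤ (ε/ℓ) η_t gap_t`, so `h` contracts by the
factor `1 - (1 - ε/ℓ) η_t`; otherwise `h_t ≤ (η_t ℓ M / (2ε))^(1/(1-r))` is already small and strong
growth adds at most `M η_t² / 2`. A Bernoulli-type inequality bounds the contraction factor by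
`(η_t / η_{t-1})^(ℓ-ε) · exp(ε (η_{t-1} - η_t))`. Since the exponent `α` of the claim is at most
`ℓ - ε`, by induction from `t = S` the envelope
`exp(ε (η_{S-1} - η_{t-1})) · max(h_S (η_{t-1}/η_{S-1})^(ℓ-ε), η_{t-1}^α K)` stays above `h_t`,
and its exponential factor is at most `exp(εℓ/S)`. -/

theorem ConvexOn.le_sub_of_hasFDerivAt {E : Type*} [NormedAddCommGroup E] [NormedSpace ℝ E]
    {s : Set E} {f : E → ℝ} {f' : E →L[ℝ] ℝ} {p q : E} (hf : ConvexOn ℝ s f)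
    (hp : p ∈ s) (hq : q ∈ s) (hf' : HasFDerivAt f f' p) :
    f' (q - p) ≤ f q - f p := by
  set γ : ℝ →ᵃ[ℝ] E := AffineMap.lineMap p q
  have hline : ConvexOn ℝ (γ ⁻¹' s) (f ∘ γ) := hf.comp_affineMap γ
  have hderiv : HasDerivAt (f ∘ γ) (f' (q - p)) 0 :=
    (by simpa [γ] using hf' : HasFDerivAt f f' (γ 0)).comp_hasDerivAt 0
      AffineMap.hasDerivAt_lineMap
  simpa [γ, slope_def_field] using
    hline.le_slope_of_hasDerivAt (by simpa [γ] using hp) (by simpa [γ] using hq) zero_lt_one hderiv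

theorem ConvexOn.inner_gradient_le_sub {F : Type*} [NormedAddCommGroup F] [InnerProductSpace ℝ F]
    [CompleteSpace F] {s : Set F} {f : F → ℝ} {p q : F} (hf : ConvexOn ℝ s f)
    (hp : p ∈ s) (hq : q ∈ s) (hd : DifferentiableAt ℝ f p) :
    inner ℝ (gradient f p) (q - p) ≤ f q - f p := by
  simpa [← InnerProductSpace.toDual_apply_apply, toDual_gradient] using
    hf.le_sub_of_hasFDerivAt hp hq hd.hasFDerivAt

section FrankWolfeVertex

variable {C : Set (Eucl n)} {f : Eucl n → ℝ} {x v : Eucl n}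

theorem IsFWVertex.gapF_eq_s7 (hv : IsFWVertex C f x v) :
    gapF C f x = inner ℝ (gradient f x) (x - v) := by
  refine IsGreatest.csSup_eq ⟨⟨v, hv.1, rfl⟩, ?_⟩
  rintro _ ⟨y, hy, rfl⟩
  simpa only [inner_sub_right, sub_le_sub_iff_left] using hv.2 y hy

theorem IsFWVertex.inner_sub_le_gapF_s7 (hv : IsFWVertex C f x v) {y : Eucl n} (hy : y ∈ C) :
    inner ℝ (gradient f x) (x - y) ≤ gapF C f x := by
  rw [hv.gapF_eq_s7]
  simpa only [inner_sub_right, sub_le_sub_iff_left] using hv.2 y hy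

theorem IsFWVertex.sub_gapF_le (hv : IsFWVertex C f x v) (hf : ConvexOn ℝ C f)
    (hd : DifferentiableAt ℝ f x) (hx : x ∈ C) {y : Eucl n} (hy : y ∈ C) :
    f x - gapF C f x ≤ f y := by
  have hconv := hf.inner_gradient_le_sub hx hy hd
  have hgap := hv.inner_sub_le_gapF_s7 hy
  rw [← neg_sub, inner_neg_right] at hgap
  linarith

theorem IsFWVertex.suboptF_nonneg (hv : IsFWVertex C f x v) (hf : ConvexOn ℝ C f)
    (hd : DifferentiableAt ℝ f x) (hx : x ∈ C) : 0 ≤ suboptF C f x :=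
  sub_nonneg.2 <| csInf_le ⟨_, forall_mem_image.2 fun _ => hv.sub_gapF_le hf hd hx⟩
    (mem_image_of_mem f hx)

theorem IsFWVertex.suboptF_le_gapF (hv : IsFWVertex C f x v) (hf : ConvexOn ℝ C f)
    (hd : DifferentiableAt ℝ f x) (hx : x ∈ C) : suboptF C f x ≤ gapF C f x := by
  have := le_csInf ((nonempty_of_mem hx).image f)
    (forall_mem_image.2 fun _ => hv.sub_gapF_le hf hd hx)
  unfold suboptF
  linarith

theorem IsFWVertex.suboptF_add_smul_sub (hv : IsFWVertex C f x v) (η : ℝ) :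
    suboptF C f (x + η • (v - x)) =
      suboptF C f x - η * gapF C f x + bregmanD f (x + η • (v - x)) x := by
  rw [hv.gapF_eq_s7, suboptF, suboptF, bregmanD, add_sub_cancel_left, inner_smul_right,
    ← neg_sub x v, inner_neg_right]
  ring

end FrankWolfeVertex

section GrowthSteps

variable {C : Set (Eucl n)} {f : Eucl n → ℝ} {x v : Eucl n} {M r η : ℝ}

theorem IsFWVertex.suboptF_step_le_of_strongGrowth (hv : IsFWVertex C f x v)
    (hf : ConvexOn ℝ C f) (hd : DifferentiableAt ℝ f x) (hx : x ∈ C)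
    (hstrong : StrongGrowth C f M 0) (hη : η ∈ Icc (0 : ℝ) 1) :
    suboptF C f (x + η • (v - x)) ≤ (1 - η) * suboptF C f x + M * η ^ 2 / 2 := by
  have hD := hstrong x hx v hv η hη
  rw [rpow_zero, mul_one] at hD
  have hgap := mul_le_mul_of_nonneg_left (hv.suboptF_le_gapF hf hd hx) hη.1
  rw [hv.suboptF_add_smul_sub]
  linarith

theorem IsFWVertex.suboptF_step_le_of_weakGrowth (hv : IsFWVertex C f x v)
    (hf : ConvexOn ℝ C f) (hd : DifferentiableAt ℝ f x) (hx : x ∈ C)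
    (hweak : WeakGrowth C f M r) (hM : 0 < M) (hη : η ∈ Ioc (0 : ℝ) 1) {δ : ℝ}
    (hδ : δ ∈ Ioc (0 : ℝ) 1) (hlarge : η * M / (2 * δ) ≤ suboptF C f x ^ (1 - r)) :
    suboptF C f (x + η • (v - x)) ≤ (1 - (1 - δ) * η) * suboptF C f x := by
  obtain ⟨hη0, hη1⟩ := hη
  obtain ⟨hδ0, hδ1⟩ := hδ
  have hgap0 : 0 ≤ gapF C f x := by simpa using hv.inner_sub_le_gapF_s7 hx
  have hD : bregmanD f (x + η • (v - x)) x ≤ δ * η * gapF C f x := by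
    have hpos : 0 < suboptF C f x ^ (1 - r) := lt_of_lt_of_le (by positivity) hlarge
    refine le_of_mul_le_mul_right ?_ hpos
    calc bregmanD f (x + η • (v - x)) x * suboptF C f x ^ (1 - r)
        ≤ M * η ^ 2 / 2 * gapF C f x := hweak x hx v hv η ⟨hη0.le, hη1⟩
      _ = η * M / (2 * δ) * (δ * η * gapF C f x) := by field_simp
      _ ≤ suboptF C f x ^ (1 - r) * (δ * η * gapF C f x) := by gcongr
      _ = δ * η * gapF C f x * suboptF C f x ^ (1 - r) := mul_comm _ _
  have hgap := mul_le_mul_of_nonneg_left (hv.suboptF_le_gapF hf hd hx)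
    (mul_nonneg (sub_nonneg.2 hδ1) hη0.le)
  rw [hv.suboptF_add_smul_sub]
  linarith

theorem IsFWVertex.suboptF_step_le_or (hv : IsFWVertex C f x v)
    (hf : ConvexOn ℝ C f) (hd : DifferentiableAt ℝ f x) (hx : x ∈ C)
    (hstrong : StrongGrowth C f M 0) (hweak : WeakGrowth C f M r) (hM : 0 < M) (hr : r < 1)
    (hη : η ∈ Ioc (0 : ℝ) 1) {δ : ℝ} (hδ : δ ∈ Ioc (0 : ℝ) 1) {α : ℝ}
    (hα : α ≤ min (1 / (1 - r)) 2) :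
    suboptF C f (x + η • (v - x)) ≤ (1 - (1 - δ) * η) * suboptF C f x ∨
      suboptF C f (x + η • (v - x)) ≤ η ^ α * ((M / (2 * δ)) ^ (1 / (1 - r)) + M / 2) := by
  obtain hlarge | hsmall := le_or_gt (η * M / (2 * δ)) (suboptF C f x ^ (1 - r))
  · exact .inl (hv.suboptF_step_le_of_weakGrowth hf hd hx hweak hM hη hδ hlarge)
  refine .inr ?_
  obtain ⟨hη0, hη1⟩ := hη
  have hδ0 := hδ.1
  have hsub0 := hv.suboptF_nonneg hf hd hx
  have hr0 : 0 < 1 - r := by linarith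
  have hsub : suboptF C f x ≤ η ^ α * (M / (2 * δ)) ^ (1 / (1 - r)) :=
    calc suboptF C f x = (suboptF C f x ^ (1 - r)) ^ (1 / (1 - r)) := by
          rw [← rpow_mul hsub0, mul_one_div_cancel hr0.ne', rpow_one]
      _ ≤ (η * (M / (2 * δ))) ^ (1 / (1 - r)) := by
          gcongr
          exact (mul_div_assoc η M (2 * δ)).symm ▸ hsmall.le
      _ = η ^ (1 / (1 - r)) * (M / (2 * δ)) ^ (1 / (1 - r)) := mul_rpow hη0.le (by positivity)
      _ ≤ η ^ α * (M / (2 * δ)) ^ (1 / (1 - r)) := mul_le_mul_of_nonneg_right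
          (rpow_le_rpow_of_exponent_ge hη0 hη1 (hα.trans (min_le_left _ _))) (by positivity)
  have hsq : M * η ^ 2 / 2 ≤ η ^ α * (M / 2) :=
    calc M * η ^ 2 / 2 = η ^ (2 : ℝ) * (M / 2) := by rw [rpow_two]; ring
      _ ≤ η ^ α * (M / 2) := mul_le_mul_of_nonneg_right
          (rpow_le_rpow_of_exponent_ge hη0 hη1 (hα.trans (min_le_right _ _))) (by positivity)
  have hdecay : (1 - η) * suboptF C f x ≤ suboptF C f x :=
    mul_le_of_le_one_left hsub0 (by linarith)
  have := hv.suboptF_step_le_of_strongGrowth hf hd hx hstrong ⟨hη0.le, hη1⟩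
  linarith

end GrowthSteps

theorem one_sub_mul_le_one_sub_rpow_mul_exp {c y B : ℝ} (hy : y ∈ Ioo (0 : ℝ) 1) (hc : 0 < c)
    (hB : c * (1 - c) ≤ B) (hB0 : 0 ≤ B) :
    1 - c * y ≤ (1 - y) ^ c * exp (B * (y ^ 2 / (1 - y))) := by
  obtain ⟨hy0, hy1⟩ := hy
  have hy1' : 0 < 1 - y := by linarith
  have hw : 0 ≤ y ^ 2 / (1 - y) := by positivity
  obtain hc1 | hc1 := le_or_gt 1 c
  · calc 1 - c * y = 1 + c * (-y) := by ring
      _ ≤ (1 + -y) ^ c := one_add_mul_self_le_rpow_one_add (by linarith) hc1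
      _ = (1 - y) ^ c := by rw [← sub_eq_add_neg]
      _ ≤ (1 - y) ^ c * exp (B * (y ^ 2 / (1 - y))) :=
          le_mul_of_one_le_right (by positivity) (one_le_exp (by positivity))
  -- for `c < 1` Bernoulli's inequality runs the other way, `(1 + z) ^ c ≤ 1 + c z`, and
  -- `z = y / (1 - y)` is chosen so that `(1 - y) (1 + z) = 1`
  set z := y / (1 - y) with hz
  have hz0 : 0 ≤ z := by positivity
  have hinv : 1 ≤ (1 - y) ^ c * (1 + c * z) :=
    calc (1 : ℝ) = ((1 - y) * (1 + z)) ^ c := by rw [hz]; field_simp; simp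
      _ = (1 - y) ^ c * (1 + z) ^ c := mul_rpow hy1'.le (by positivity)
      _ ≤ (1 - y) ^ c * (1 + c * z) := by
          gcongr
          exact rpow_one_add_le_one_add_mul_self (by linarith) hc.le hc1.le
  calc 1 - c * y ≤ (1 - c * y) * ((1 - y) ^ c * (1 + c * z)) :=
        le_mul_of_one_le_right (by nlinarith) hinv
    _ = (1 - y) ^ c * (1 + c * (1 - c) * (y ^ 2 / (1 - y))) := by rw [hz]; field_simp; ring
    _ ≤ (1 - y) ^ c * exp (B * (y ^ 2 / (1 - y))) := by
        gcongr
        calc 1 + c * (1 - c) * (y ^ 2 / (1 - y)) ≤ B * (y ^ 2 / (1 - y)) + 1 := by nlinarith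
          _ ≤ exp (B * (y ^ 2 / (1 - y))) := add_one_le_exp _

section OpenLoopSteps

variable {ℓ : ℝ} {η : ℕ → ℝ}

theorem openLoop_pos (hη : ∀ t : ℕ, η t = ℓ / (t + ℓ)) (hℓ : 0 < ℓ) (t : ℕ) : 0 < η t := by
  rw [hη]; positivity

theorem openLoop_le_one (hη : ∀ t : ℕ, η t = ℓ / (t + ℓ)) (hℓ : 0 < ℓ) (t : ℕ) : η t ≤ 1 := by
  rw [hη, div_le_one (by positivity)]
  linarith [t.cast_nonneg (α := ℝ)]

theorem openLoop_antitone (hη : ∀ t : ℕ, η t = ℓ / (t + ℓ)) (hℓ : 0 < ℓ) : Antitone η :=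
  antitone_nat_of_succ_le fun t => by
    rw [hη, hη]; push_cast
    gcongr; linarith

theorem openLoop_succ_div (hη : ∀ t : ℕ, η t = ℓ / (t + ℓ)) (hℓ : 0 < ℓ) (t : ℕ) :
    η (t + 1) / η t = 1 - 1 / (t + 1 + ℓ) := by
  rw [hη, hη]; push_cast
  field_simp
  ring

theorem one_sub_mul_openLoop_succ_le (hη : ∀ t : ℕ, η t = ℓ / (t + ℓ)) (hℓ : 1 ≤ ℓ) {ε : ℝ}
    (hε : ε ∈ Ioo (0 : ℝ) ℓ) (t : ℕ) :
    1 - (1 - ε / ℓ) * η (t + 1) ≤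
      (η (t + 1) / η t) ^ (ℓ - ε) * exp (ε * (η t - η (t + 1))) := by
  obtain ⟨hε0, hεℓ⟩ := hε
  have hb : (t : ℝ) + 1 + ℓ ≠ 0 := by positivity
  have key := one_sub_mul_le_one_sub_rpow_mul_exp (c := ℓ - ε) (y := 1 / (t + 1 + ℓ))
    (B := ε * ℓ) ⟨by positivity, by rw [div_lt_one (by positivity)]; linarith⟩
    (by linarith) (by nlinarith) (by positivity)
  have hfactor : (1 - ε / ℓ) * η (t + 1) = (ℓ - ε) * (1 / (t + 1 + ℓ)) := by
    rw [hη]; push_cast; field_simp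
  have hexp : ε * (η t - η (t + 1)) = ε * ℓ * ((1 / (t + 1 + ℓ)) ^ 2 / (1 - 1 / (t + 1 + ℓ))) := by
    rw [show 1 - 1 / ((t : ℝ) + 1 + ℓ) = (t + ℓ) / (t + 1 + ℓ) by field_simp; ring, hη, hη]
    push_cast; field_simp; ring
  rwa [openLoop_succ_div hη (by linarith), hfactor, hexp]

end OpenLoopSteps

theorem rpow_mul_max_le {θ c α K a p q : ℝ} (hθ0 : 0 < θ) (hθ1 : θ ≤ 1) (hα : α ≤ c)
    (hK : 0 ≤ K) (hp : 0 ≤ p) (hq : 0 ≤ q) :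
    θ ^ c * max (a * q ^ c) (p ^ α * K) ≤ max (a * (θ * q) ^ c) ((θ * p) ^ α * K) := by
  rw [mul_max_of_nonneg _ _ (rpow_nonneg hθ0.le _), mul_rpow hθ0.le hq, mul_rpow hθ0.le hp]
  refine max_le_max (le_of_eq (by ring)) ?_
  calc θ ^ c * (p ^ α * K) ≤ θ ^ α * (p ^ α * K) :=
        mul_le_mul_of_nonneg_right (rpow_le_rpow_of_exponent_ge hθ0 hθ1 hα) (by positivity)
    _ = θ ^ α * p ^ α * K := by ring

theorem le_exp_mul_max_of_openLoop_recursion {ℓ : ℝ} {η : ℕ → ℝ}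
    (hη : ∀ t : ℕ, η t = ℓ / (t + ℓ)) (hℓ : 1 ≤ ℓ) {ε α K : ℝ} (hε : ε ∈ Ioo (0 : ℝ) ℓ)
    (hα : α ≤ ℓ - ε) (hK : 0 ≤ K) {g : ℕ → ℝ} {s : ℕ}
    (hg : ∀ t, s ≤ t → g (t + 1) ≤ (1 - (1 - ε / ℓ) * η (t + 1)) * g t ∨
      g (t + 1) ≤ η (t + 1) ^ α * K)
    {t : ℕ} (ht : s ≤ t) :
    g t ≤ exp (ε * (η s - η t)) * max (g s * (η t / η s) ^ (ℓ - ε)) (η t ^ α * K) := by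
  have hℓ0 : 0 < ℓ := by linarith
  have hη0 := openLoop_pos hη hℓ0
  have hmax0 (t : ℕ) : 0 ≤ max (g s * (η t / η s) ^ (ℓ - ε)) (η t ^ α * K) :=
    (mul_nonneg (rpow_nonneg (hη0 t).le _) hK).trans (le_max_right _ _)
  induction t, ht using Nat.le_induction with
  | base => simp [div_self (hη0 s).ne']
  | succ t hst ih =>
    have hθ0 : 0 < η (t + 1) / η t := div_pos (hη0 _) (hη0 _)
    have hθη : η (t + 1) / η t * η t = η (t + 1) := div_mul_cancel₀ _ (hη0 t).ne'
    have hshift := rpow_mul_max_le (a := g s) hθ0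
      ((div_le_one (hη0 t)).2 (openLoop_antitone hη hℓ0 t.le_succ)) hα hK (hη0 t).le
      (div_pos (hη0 t) (hη0 s)).le
    rw [hθη, ← mul_div_assoc, hθη] at hshift
    obtain hcontract | hreset := hg t hst
    · have hρ : 0 ≤ 1 - (1 - ε / ℓ) * η (t + 1) :=
        sub_nonneg.2 (mul_le_one₀ (by linarith [div_pos hε.1 hℓ0]) (hη0 _).le
          (openLoop_le_one hη hℓ0 _))
      calc g (t + 1) ≤ (1 - (1 - ε / ℓ) * η (t + 1)) * g t := hcontract
        _ ≤ ((η (t + 1) / η t) ^ (ℓ - ε) * exp (ε * (η t - η (t + 1)))) *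
              (exp (ε * (η s - η t)) * max (g s * (η t / η s) ^ (ℓ - ε)) (η t ^ α * K)) :=
            (mul_le_mul_of_nonneg_left ih hρ).trans (mul_le_mul_of_nonneg_right
              (one_sub_mul_openLoop_succ_le hη hℓ hε t) (mul_nonneg (exp_pos _).le (hmax0 t)))
        _ = exp (ε * (η s - η (t + 1))) * ((η (t + 1) / η t) ^ (ℓ - ε) *
              max (g s * (η t / η s) ^ (ℓ - ε)) (η t ^ α * K)) := by
            rw [show ε * (η s - η (t + 1)) = ε * (η t - η (t + 1)) + ε * (η s - η t) by ring,
              exp_add]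
            ring
        _ ≤ _ := mul_le_mul_of_nonneg_left hshift (exp_pos _).le
    · have hE : 1 ≤ exp (ε * (η s - η (t + 1))) := one_le_exp (mul_nonneg hε.1.le
        (sub_nonneg.2 (openLoop_antitone hη hℓ0 (hst.trans t.le_succ))))
      exact hreset.trans ((le_max_right _ _).trans (le_mul_of_one_le_left (hmax0 _) hE))

theorem fw_weak_growth_rate_general
    (n : ℕ) (C : Set (Eucl n)) (f : Eucl n → ℝ)
    (hCconv : Convex ℝ C)
    (hfconv : ConvexOn ℝ C f)
    (U : Set (Eucl n)) (hUopen : IsOpen U) (hCU : C ⊆ U)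
    (hfdiff : DifferentiableOn ℝ f U)
    (M r : ℝ) (hM : 0 < M) (hr : r ∈ Ico (0 : ℝ) 1)
    (hstrong : StrongGrowth C f M 0) (hweak : WeakGrowth C f M r)
    (ℓ : ℕ) (hℓ : 1 ≤ ℓ)
    (η : ℕ → ℝ) (hη : ∀ t : ℕ, η t = (ℓ : ℝ) / ((t : ℝ) + ℓ))
    (x v : ℕ → Eucl n)
    (hx0 : x 0 ∈ C)
    (hv : ∀ t : ℕ, IsFWVertex C f (x t) (v t))
    (hstep : ∀ t : ℕ, x (t + 1) = x t + η t • (v t - x t))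
    (S : ℕ) (hS : S = max 1 (⌈(ℓ : ℝ) * M / 2 - (ℓ : ℝ)⌉.toNat))
    (ε : ℝ) (hε : ε ∈ Ioo (0 : ℝ) (ℓ : ℝ))
    (t : ℕ) (ht : S ≤ t) :
    suboptF C f (x t) ≤
      Real.exp (ε * ℓ / S) *
        max (suboptF C f (x S) * (η (t - 1) / η (S - 1)) ^ ((ℓ : ℝ) - ε))
          (η (t - 1) ^ min (min ((ℓ : ℝ) - ε) (1 / (1 - r))) 2 *
            (((ℓ : ℝ) * M / (2 * ε)) ^ (1 / (1 - r)) + M / 2)) := by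
  have hℓ1 : (1 : ℝ) ≤ ℓ := by exact_mod_cast hℓ
  have hℓ0 : (0 : ℝ) < ℓ := by linarith
  have hε0 := hε.1
  have hη0 := openLoop_pos hη hℓ0
  have hη1 := openLoop_le_one hη hℓ0
  have hmem : ∀ t, x t ∈ C := Nat.rec hx0 fun t ht => hstep t ▸
    hCconv.add_smul_sub_mem ht (hv t).1 ⟨(hη0 t).le, hη1 t⟩
  have hδ : ε / ℓ ∈ Ioc (0 : ℝ) 1 := ⟨by positivity, (div_le_one₀ hℓ0).2 hε.2.le⟩
  have hK0 : 0 ≤ ((ℓ : ℝ) * M / (2 * ε)) ^ (1 / (1 - r)) + M / 2 := by positivity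
  set α := min (min ((ℓ : ℝ) - ε) (1 / (1 - r))) 2
  set K := ((ℓ : ℝ) * M / (2 * ε)) ^ (1 / (1 - r)) + M / 2
  have hrec (t : ℕ) : suboptF C f (x (t + 1)) ≤ (1 - (1 - ε / ℓ) * η t) * suboptF C f (x t) ∨
      suboptF C f (x (t + 1)) ≤ η t ^ α * K := by
    have := (hv t).suboptF_step_le_or hfconv
      (hfdiff.differentiableAt (hUopen.mem_nhds (hCU (hmem t)))) (hmem t) hstrong hweak hM hr.2
      ⟨hη0 t, hη1 t⟩ hδ (α := α) (min_le_min_right 2 (min_le_right _ _))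
    rwa [← hstep, show M / (2 * (ε / ℓ)) = ℓ * M / (2 * ε) by field_simp] at this
  obtain ⟨s, rfl⟩ : ∃ s, S = s + 1 := Nat.exists_eq_add_of_le' (hS ▸ le_max_left _ _)
  obtain ⟨m, rfl⟩ : ∃ m, t = m + 1 := Nat.exists_eq_add_of_le' (by omega)
  have hbound := le_exp_mul_max_of_openLoop_recursion (g := fun k => suboptF C f (x (k + 1)))
    hη hℓ1 hε ((min_le_left _ _).trans (min_le_left _ _)) hK0
    (fun k _ => hrec (k + 1)) (Nat.le_of_succ_le_succ ht)
  simp only [Nat.add_sub_cancel]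
  refine hbound.trans (mul_le_mul_of_nonneg_right (exp_le_exp.2 ?_)
    ((mul_nonneg (rpow_nonneg (hη0 m).le _) hK0).trans (le_max_right _ _)))
  calc ε * (η s - η m) ≤ ε * η s := by nlinarith [hη0 m]
    _ ≤ ε * ℓ / ↑(s + 1) := by
        rw [hη, mul_div_assoc]; push_cast
        gcongr

/-- **Theorem (weak `(M,r)`-growth, suboptimality rate).** -/
theorem fw_weak_growth_rate
    (n : ℕ) (C : Set (Eucl n)) (f : Eucl n → ℝ)
    (hCcomp : IsCompact C) (hCconv : Convex ℝ C) (hCne : C.Nonempty)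
    (hfconv : ConvexOn ℝ C f)
    (U : Set (Eucl n)) (hUopen : IsOpen U) (hCU : C ⊆ U)
    (hfdiff : DifferentiableOn ℝ f U)
    (M r : ℝ) (hM : 0 < M) (hr : r ∈ Ico (0 : ℝ) 1)
    (hstrong : StrongGrowth C f M 0) (hweak : WeakGrowth C f M r)
    (ℓ : ℕ) (hℓ : 1 ≤ ℓ)
    (η : ℕ → ℝ) (hη : ∀ t : ℕ, η t = (ℓ : ℝ) / ((t : ℝ) + ℓ))
    (x v : ℕ → Eucl n)
    (hx0 : x 0 ∈ C)
    (hv : ∀ t : ℕ, IsFWVertex C f (x t) (v t))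
    (hstep : ∀ t : ℕ, x (t + 1) = x t + η t • (v t - x t))
    (S : ℕ) (hS : S = max 1 (⌈(ℓ : ℝ) * M / 2 - (ℓ : ℝ)⌉.toNat))
    (ε : ℝ) (hε : ε ∈ Ioo (0 : ℝ) (ℓ : ℝ))
    (t : ℕ) (ht : S ≤ t) :
    suboptF C f (x t) ≤
      Real.exp (ε * ℓ / S) *
        max (suboptF C f (x S) * (η (t - 1) / η (S - 1)) ^ ((ℓ : ℝ) - ε))
          (η (t - 1) ^ min (min ((ℓ : ℝ) - ε) (1 / (1 - r))) 2 *
            (((ℓ : ℝ) * M / (2 * ε)) ^ (1 / (1 - r)) + M / 2)) :=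
  fw_weak_growth_rate_general n C f hCconv hfconv U hUopen hCU hfdiff M r hM hr hstrong hweak ℓ hℓ η
    hη x v hx0 hv hstep S hS ε hε t ht
end
end
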